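/- arXiv:1509.08272 — 6 statements merged into one kernel-verified Lean document; each statement's English description precedes it below -/
import Mathlib

section
/- Assume c² := ∫₀^∞ w(x)⁻¹ dx < ∞. Then for every t ≥ 0 the right-shift S_t f := f(t + ·) maps H_w into H_w and is uniformly bounded: ‖S_t f‖²_w ≤ 2 (1 + c²) ‖f‖²_w for all f ∈ H_w and all t ≥ 0; in particular the operator norm of S_t on H_w is at most √(2(1+c²)). -/
open MeasureTheory Filter Set
open scoped ENNReal NNReal Topology

/-- `f' : ℝ → H` is a weak derivative of `f : ℝ → H` on `[0,∞)`: it is locally Bochner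
integrable and the fundamental theorem of calculus `f(x) = f(0) + ∫₀ˣ f'(y) dy` holds. -/
def HasWeakDeriv {H : Type*} [NormedAddCommGroup H] [NormedSpace ℝ H]
    (f f' : ℝ → H) : Prop :=
  (∀ x : ℝ, 0 ≤ x → IntegrableOn f' (Icc 0 x)) ∧
    ∀ x : ℝ, 0 ≤ x → f x = f 0 + ∫ y in Ioc (0 : ℝ) x, f' y

/-- The squared norm `‖f‖²_w = |f(0)|²_H + ∫₀^∞ w(x) |f'(x)|²_H dx` of an element of the
`H`-valued Filipovic space, recorded through the value `a = f(0)` and the weak derivative `f'`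
(extended-real valued, so membership in `H_w` means this quantity is finite). -/
noncomputable def wNormSq {H : Type*} [NormedAddCommGroup H] (w : ℝ → ℝ) (a : H)
    (f' : ℝ → H) : ℝ≥0∞ :=
  (‖a‖₊ : ℝ≥0∞) ^ 2 + ∫⁻ x in Ioi (0 : ℝ), ENNReal.ofReal (w x) * (‖f' x‖₊ : ℝ≥0∞) ^ 2

/-! The derivative part of `‖S_t f‖²_w` is `∫ w(x) |f'(t+x)|² ≤ ∫ w(t+x) |f'(t+x)|² ≤ ∫ w |f'|²`,
since `w` is nondecreasing. For the value part, `f(t) = f(0) + ∫₀ᵗ f'` and the Cauchy–Schwarz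
inequality with weight `w` give `(∫₀ᵗ |f'|)² ≤ c² ∫ w |f'|²`, hence
`|f(t)|² ≤ 2 |f(0)|² + 2 c² ∫ w |f'|²`. -/

theorem ENNReal.add_sq_le_two_mul (a b : ℝ≥0∞) : (a + b) ^ 2 ≤ 2 * (a ^ 2 + b ^ 2) := by
  rcases eq_or_ne a ⊤ with rfl | ha
  · simp
  rcases eq_or_ne b ⊤ with rfl | hb
  · simp
  lift a to ℝ≥0 using ha
  lift b to ℝ≥0 using hb
  exact_mod_cast add_sq_le (a := a) (b := b)

theorem ENNReal.lintegral_sq_le_lintegral_inv_mul {α : Type*} [MeasurableSpace α] {μ : Measure α}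
    {ρ g : α → ℝ≥0∞} (hρ : Measurable ρ) (hg : AEMeasurable g μ)
    (hρ0 : ∀ᵐ x ∂μ, ρ x ≠ 0) (hρtop : ∀ᵐ x ∂μ, ρ x ≠ ∞) :
    (∫⁻ x, g x ∂μ) ^ 2 ≤ (∫⁻ x, (ρ x)⁻¹ ∂μ) * ∫⁻ x, ρ x * g x ^ 2 ∂μ := by
  have hsplit : ∫⁻ x, g x ∂μ = ∫⁻ x, (ρ x)⁻¹ ^ (2⁻¹ : ℝ) * (ρ x ^ (2⁻¹ : ℝ) * g x) ∂μ := by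
    refine lintegral_congr_ae ?_
    filter_upwards [hρ0, hρtop] with x h0 htop
    rw [← mul_assoc, ← ENNReal.mul_rpow_of_nonneg _ _ (by norm_num),
      ENNReal.inv_mul_cancel h0 htop, ENNReal.one_rpow, one_mul]
  have holder := ENNReal.lintegral_mul_le_Lp_mul_Lq μ Real.HolderConjugate.two_two
    (f := fun x => (ρ x)⁻¹ ^ (2⁻¹ : ℝ)) (g := fun x => ρ x ^ (2⁻¹ : ℝ) * g x)
    (by fun_prop) (by fun_prop)
  have hsq : ∀ y : ℝ≥0∞, (y ^ (2⁻¹ : ℝ)) ^ 2 = y := fun y => by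
    rw [← ENNReal.rpow_two, ← ENNReal.rpow_mul]; norm_num
  simp only [ENNReal.mul_rpow_of_nonneg _ _ zero_le_two, ENNReal.rpow_two, hsq, one_div] at holder
  calc (∫⁻ x, g x ∂μ) ^ 2
      ≤ ((∫⁻ x, (ρ x)⁻¹ ∂μ) ^ (2⁻¹ : ℝ) * (∫⁻ x, ρ x * g x ^ 2 ∂μ) ^ (2⁻¹ : ℝ)) ^ 2 := by
        rw [hsplit]; gcongr; exact holder
    _ = (∫⁻ x, (ρ x)⁻¹ ∂μ) * ∫⁻ x, ρ x * g x ^ 2 ∂μ := by rw [mul_pow, hsq, hsq]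

namespace HasWeakDeriv

variable {H : Type*} [NormedAddCommGroup H] [NormedSpace ℝ H] {f f' : ℝ → H} {t : ℝ}

theorem intervalIntegrable (hf : HasWeakDeriv f f') {a b : ℝ} (ha : 0 ≤ a) (hb : 0 ≤ b) :
    IntervalIntegrable f' volume a b :=
  ((hf.1 (max a b) (ha.trans (le_max_left a b))).mono_set
    (Icc_subset_Icc (le_min ha hb) le_rfl)).intervalIntegrable

theorem eq_add_intervalIntegral (hf : HasWeakDeriv f f') {x : ℝ} (hx : 0 ≤ x) :
    f x = f 0 + ∫ y in (0 : ℝ)..x, f' y := by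
  rw [intervalIntegral.integral_of_le hx, ← hf.2 x hx]

theorem comp_add_left (hf : HasWeakDeriv f f') (ht : 0 ≤ t) :
    HasWeakDeriv (fun x => f (t + x)) (fun x => f' (t + x)) := by
  have emb : MeasurableEmbedding (fun x : ℝ => t + x) :=
    (MeasurableEquiv.addLeft t).measurableEmbedding
  refine ⟨fun x hx => ?_, fun x hx => ?_⟩
  · have h := (hf.1 (t + x) (by linarith)).mono_set (Icc_subset_Icc_left ht)
    rw [← (measurePreserving_add_left volume t).integrableOn_comp_preimage emb] at h
    simpa [Function.comp_def] using h
  · dsimp only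
    rw [← intervalIntegral.integral_of_le hx, intervalIntegral.integral_comp_add_left,
      add_zero, hf.eq_add_intervalIntegral (by linarith), hf.eq_add_intervalIntegral ht, add_assoc,
      intervalIntegral.integral_add_adjacent_intervals (hf.intervalIntegrable le_rfl ht)
        (hf.intervalIntegrable ht (by linarith))]

theorem enorm_le_add_setLIntegral (hf : HasWeakDeriv f f') (ht : 0 ≤ t) :
    ‖f t‖ₑ ≤ ‖f 0‖ₑ + ∫⁻ y in Ioc 0 t, ‖f' y‖ₑ := by
  rw [hf.2 t ht]
  exact (enorm_add_le _ _).trans (by gcongr; exact enorm_integral_le_lintegral_enorm _)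

end HasWeakDeriv

theorem setLIntegral_Ioi_comp_add_left_le {w : ℝ → ℝ} (hw : MonotoneOn w (Ici 0)) {t : ℝ}
    (ht : 0 ≤ t) (g : ℝ → ℝ≥0∞) :
    ∫⁻ x in Ioi 0, ENNReal.ofReal (w x) * g (t + x) ≤
      ∫⁻ x in Ioi 0, ENNReal.ofReal (w x) * g x := by
  have emb : MeasurableEmbedding (fun x : ℝ => t + x) :=
    (MeasurableEquiv.addLeft t).measurableEmbedding
  calc ∫⁻ x in Ioi 0, ENNReal.ofReal (w x) * g (t + x)
      ≤ ∫⁻ x in Ioi 0, ENNReal.ofReal (w (t + x)) * g (t + x) := by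
        refine setLIntegral_mono' measurableSet_Ioi fun x hx => ?_
        gcongr
        have hx : 0 < x := hx
        exact hw (mem_Ici.2 hx.le) (mem_Ici.2 (by linarith)) (by linarith)
    _ = ∫⁻ y in Ioi t, ENNReal.ofReal (w y) * g y := by
        simpa using (measurePreserving_add_left volume t).setLIntegral_comp_preimage_emb emb
          (fun y => ENNReal.ofReal (w y) * g y) (Ioi t)
    _ ≤ ∫⁻ x in Ioi 0, ENNReal.ofReal (w x) * g x := lintegral_mono_set (Ioi_subset_Ioi ht)

theorem HasWeakDeriv.enorm_sq_le {H : Type*} [NormedAddCommGroup H] [NormedSpace ℝ H]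
    {f f' : ℝ → H} {w : ℝ → ℝ} (hwmeas : Measurable w) (hw : ∀ x, 0 < x → 0 < w x)
    (hf : HasWeakDeriv f f') {t : ℝ} (ht : 0 ≤ t) :
    ‖f t‖ₑ ^ 2 ≤ 2 * (‖f 0‖ₑ ^ 2 + (∫⁻ x in Ioi 0, ENNReal.ofReal (w x)⁻¹) *
      ∫⁻ x in Ioi 0, ENNReal.ofReal (w x) * ‖f' x‖ₑ ^ 2) := by
  have hinv : ∫⁻ x in Ioc 0 t, (ENNReal.ofReal (w x))⁻¹ =
      ∫⁻ x in Ioc 0 t, ENNReal.ofReal (w x)⁻¹ :=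
    setLIntegral_congr_fun measurableSet_Ioc fun x hx =>
      (ENNReal.ofReal_inv_of_pos (hw x hx.1)).symm
  have cauchySchwarz := ENNReal.lintegral_sq_le_lintegral_inv_mul
    (μ := volume.restrict (Ioc 0 t)) (g := fun y => ‖f' y‖ₑ) hwmeas.ennreal_ofReal
    ((hf.1 t ht).mono_set Ioc_subset_Icc_self).aestronglyMeasurable.enorm
    (ae_restrict_of_forall_mem measurableSet_Ioc fun x hx =>
      (ENNReal.ofReal_pos.2 (hw x hx.1)).ne')
    (ae_of_all _ fun _ => ENNReal.ofReal_ne_top)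
  rw [hinv] at cauchySchwarz
  calc ‖f t‖ₑ ^ 2 ≤ (‖f 0‖ₑ + ∫⁻ y in Ioc 0 t, ‖f' y‖ₑ) ^ 2 := by
        gcongr; exact hf.enorm_le_add_setLIntegral ht
    _ ≤ 2 * (‖f 0‖ₑ ^ 2 + (∫⁻ y in Ioc 0 t, ‖f' y‖ₑ) ^ 2) := ENNReal.add_sq_le_two_mul _ _
    _ ≤ 2 * (‖f 0‖ₑ ^ 2 + (∫⁻ x in Ioc 0 t, ENNReal.ofReal (w x)⁻¹) *
          ∫⁻ x in Ioc 0 t, ENNReal.ofReal (w x) * ‖f' x‖ₑ ^ 2) := by gcongr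
    _ ≤ _ := by gcongr <;> exact Ioc_subset_Ioi_self

theorem stmt_6_general {H : Type*} [NormedAddCommGroup H] [InnerProductSpace ℝ H]
    (w : ℝ → ℝ) (hwmono : MonotoneOn w (Ici 0))
    (hw1 : ∀ x : ℝ, 0 ≤ x → 1 ≤ w x) (hwmeas : Measurable w) :
    ∀ t : ℝ, 0 ≤ t → ∀ f f' : ℝ → H, HasWeakDeriv f f' → wNormSq w (f 0) f' < ⊤ →
      HasWeakDeriv (fun x => f (t + x)) (fun x => f' (t + x))
        ∧ wNormSq w (f t) (fun x => f' (t + x))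
            ≤ 2 * (1 + ∫⁻ x in Ioi (0 : ℝ), ENNReal.ofReal (w x)⁻¹) * wNormSq w (f 0) f' := by
  intro t ht f f' hf _
  refine ⟨hf.comp_add_left ht, ?_⟩
  set C := ∫⁻ x in Ioi (0 : ℝ), ENNReal.ofReal (w x)⁻¹
  set I := ∫⁻ x in Ioi (0 : ℝ), ENNReal.ofReal (w x) * ‖f' x‖ₑ ^ 2
  have hvalue := hf.enorm_sq_le hwmeas (fun x hx => one_pos.trans_le (hw1 x hx.le)) ht
  have henergy := setLIntegral_Ioi_comp_add_left_le hwmono ht fun x => ‖f' x‖ₑ ^ 2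
  calc wNormSq w (f t) (fun x => f' (t + x))
      ≤ 2 * (‖f 0‖ₑ ^ 2 + C * I) + I := add_le_add hvalue henergy
    _ ≤ 2 * (‖f 0‖ₑ ^ 2 + C * I) + I + (2 * C * ‖f 0‖ₑ ^ 2 + I) := le_self_add
    _ = 2 * (1 + C) * wNormSq w (f 0) f' := by simp only [wNormSq, ← enorm_eq_nnnorm]; ring

/-- Lemma 3.4. If `∫₀^∞ w⁻¹ < ∞`, the right-shift `S_t f := f(t + ·)` maps
`H_w` into itself with `‖S_t f‖²_w ≤ 2 (1 + c²) ‖f‖²_w`, `c² = ∫₀^∞ w⁻¹`; in particular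
`‖S_t‖_op ≤ √(2(1+c²))`. -/
theorem stmt_6 {H : Type*} [NormedAddCommGroup H] [InnerProductSpace ℝ H] [CompleteSpace H]
    [SecondCountableTopology H]
    (w : ℝ → ℝ) (hwmono : MonotoneOn w (Ici 0)) (hw0 : w 0 = 1)
    (hw1 : ∀ x : ℝ, 0 ≤ x → 1 ≤ w x) (hwmeas : Measurable w)
    (hc : (∫⁻ x in Ioi (0 : ℝ), ENNReal.ofReal (w x)⁻¹) < ⊤) :
    ∀ t : ℝ, 0 ≤ t → ∀ f f' : ℝ → H, HasWeakDeriv f f' → wNormSq w (f 0) f' < ⊤ →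
      HasWeakDeriv (fun x => f (t + x)) (fun x => f' (t + x))
        ∧ wNormSq w (f t) (fun x => f' (t + x))
            ≤ 2 * (1 + ∫⁻ x in Ioi (0 : ℝ), ENNReal.ofReal (w x)⁻¹) * wNormSq w (f 0) f' :=
  stmt_6_general w hwmono hw1 hwmeas
end

section
/- Assume c² := ∫₀^∞ w(x)⁻¹ dx < ∞. Then the right-shift semigroup (S_t)_{t≥0}, S_t f := f(t + ·), is strongly continuous on H_w: for every f ∈ H_w, ‖S_t f − f‖_w → 0 as t ↓ 0. -/
open MeasureTheory Filter Set
open scoped ENNReal NNReal Topology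

/-!
The value part `‖f t - f 0‖ ≤ ∫₀ᵗ ‖f'‖` vanishes by right continuity of the primitive. For the
derivative part put `G = 𝟙_{(0,∞)} √w f' ∈ L²(ℝ; H)`; for `x, t > 0`,
`√w(x) (f'(t+x) - f'(x)) = (G(t+x) - G(x)) - (√w(t+x) - √w(x)) f'(t+x)`.
The first term tends to `0` in `L²` by continuity of translation. The squared second term,
written in `y = t + x`, is dominated by `w(y) ‖f'(y)‖²` because `w` is nondecreasing, and it tends
to `0` at every continuity point of `w`, that is, off a countable set; dominated convergence
concludes.
-/

lemma ofReal_sq_sqrt_sub_sqrt_le {a b : ℝ} (h : a ≤ b) :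
    ENNReal.ofReal ((√b - √a) ^ 2) ≤ ENNReal.ofReal b := by
  calc ENNReal.ofReal ((√b - √a) ^ 2) ≤ ENNReal.ofReal (√b ^ 2) := by
        gcongr
        · exact sub_nonneg.2 (Real.sqrt_le_sqrt h)
        · exact sub_le_self _ (Real.sqrt_nonneg a)
    _ = ENNReal.ofReal b := by rw [Real.sq_sqrt']; simp

lemma eLpNorm_two_sq {α E : Type*} [MeasurableSpace α] [NormedAddCommGroup E] (f : α → E)
    (μ : Measure α) : eLpNorm f 2 μ ^ 2 = ∫⁻ x, ‖f x‖ₑ ^ 2 ∂μ := by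
  simpa using eLpNorm_nnreal_pow_eq_lintegral (f := f) (μ := μ) (p := 2) two_ne_zero

lemma tendsto_eLpNorm_comp_add_left_sub {E : Type*} [NormedAddCommGroup E] {p : ℝ≥0∞}
    [Fact (1 ≤ p)] (hp : p ≠ ∞) {G : ℝ → E} (hG : MemLp G p) :
    Tendsto (fun t : ℝ => eLpNorm (fun x => G (t + x) - G x) p) (𝓝 0) (𝓝 0) := by
  let shift : ℝ → C(ℝ, ℝ) := fun t => ⟨(t + ·), by fun_prop⟩
  have hshift : Continuous shift :=
    ContinuousMap.continuous_of_continuous_uncurry _ (continuous_fst.add continuous_snd)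
  have hmp (t : ℝ) : MeasurePreserving (shift t) := measurePreserving_add_left volume t
  have key := (tendsto_const_nhds (x := hG.toLp G)).compMeasurePreservingLp
    (hshift.tendsto 0) hmp (hmp 0) hp
  rw [Lp.tendsto_Lp_iff_tendsto_eLpNorm'] at key
  refine key.congr fun t => eLpNorm_congr_ae ?_
  have hcomp (s : ℝ) : Lp.compMeasurePreserving (shift s) (hmp s) (hG.toLp G) =ᵐ[volume]
      fun x => G (s + x) :=
    (Lp.coeFn_compMeasurePreserving _ (hmp s)).trans
      ((hmp s).quasiMeasurePreserving.ae_eq_comp hG.coeFn_toLp)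
  filter_upwards [hcomp t, hcomp 0] with x ht h0
  rw [Pi.sub_apply, ht, h0, zero_add]

lemma setLIntegral_Ioi_comp_add_left (F : ℝ → ℝ≥0∞) (t a : ℝ) :
    ∫⁻ x in Ioi a, F (t + x) = ∫⁻ y in Ioi (t + a), F y := by
  have := (measurePreserving_add_left volume t).setLIntegral_comp_preimage_emb
    (measurableEmbedding_addLeft t) F (Ioi (t + a))
  simpa using this

lemma ae_restrict_Ioi_comp_add_left {p : ℝ → Prop} {a t : ℝ} (ht : 0 ≤ t)
    (h : ∀ᵐ x ∂volume.restrict (Ioi a), p x) : ∀ᵐ x ∂volume.restrict (Ioi a), p (t + x) := by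
  rw [ae_restrict_iff' measurableSet_Ioi] at h ⊢
  filter_upwards [(measurePreserving_add_left volume t).quasiMeasurePreserving.ae h] with x hx hxa
  exact hx (lt_add_of_nonneg_of_lt ht hxa)

lemma MonotoneOn.ae_restrict_continuousAt {μ : Measure ℝ} [NullSingletonClass μ] {w : ℝ → ℝ}
    {s : Set ℝ} (hw : MonotoneOn w s) (hs : IsOpen s) : ∀ᵐ y ∂μ.restrict s, ContinuousAt w y := by
  rw [ae_restrict_iff' hs.measurableSet]
  refine measure_mono_null (fun y hy => ?_) (hw.countable_not_continuousWithinAt.measure_zero μ)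
  simp only [mem_compl_iff, mem_ofPred_eq, Classical.not_imp] at hy
  obtain ⟨hys, hcont⟩ := hy
  exact ⟨hys, fun h => hcont (h.continuousAt (hs.mem_nhds hys))⟩

lemma ContinuousAt.tendsto_ofReal_sq_sqrt_sub_sqrt_comp_sub {w : ℝ → ℝ} {y : ℝ}
    (hw : ContinuousAt w y) :
    Tendsto (fun t => ENNReal.ofReal ((√(w y) - √(w (y - t))) ^ 2)) (𝓝 0) (𝓝 0) := by
  have hwt : Tendsto (fun t => w (y - t)) (𝓝 0) (𝓝 (w y)) :=
    hw.tendsto.comp ((continuous_sub_left y).tendsto' 0 y (sub_zero y))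
  have hsq : Tendsto (fun t => (√(w y) - √(w (y - t))) ^ 2) (𝓝 0) (𝓝 0) := by
    simpa [Function.comp_def] using (Continuous.tendsto
      (f := fun s : ℝ => (√(w y) - √s) ^ (2 : ℕ)) (by fun_prop) (w y)).comp hwt
  simpa using ENNReal.tendsto_ofReal hsq

lemma tendsto_lintegral_sqrt_weight_shift_sub_sq {E : Type*} [NormedAddCommGroup E]
    {w : ℝ → ℝ} (hwmono : MonotoneOn w (Ioi 0)) (hwmeas : Measurable w)
    {g : ℝ → E} (hg : StronglyMeasurable g)
    (hfin : ∫⁻ x in Ioi 0, ENNReal.ofReal (w x) * ‖g x‖ₑ ^ 2 ≠ ∞) :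
    Tendsto (fun t => ∫⁻ x in Ioi 0,
        ENNReal.ofReal ((√(w (t + x)) - √(w x)) ^ 2) * ‖g (t + x)‖ₑ ^ 2) (𝓝[>] 0) (𝓝 0) := by
  set F : ℝ → ℝ → ℝ≥0∞ := fun t y => ENNReal.ofReal ((√(w y) - √(w (y - t))) ^ 2) * ‖g y‖ₑ ^ 2
  have hF : ∀ t > 0, ∫⁻ x in Ioi 0,
      ENNReal.ofReal ((√(w (t + x)) - √(w x)) ^ 2) * ‖g (t + x)‖ₑ ^ 2 =
        ∫⁻ y in Ioi 0, (Ioi t).indicator (F t) y := fun t ht => by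
    calc _ = ∫⁻ x in Ioi 0, F t (t + x) := by simp only [F, add_sub_cancel_left]
      _ = ∫⁻ y in Ioi t, F t y := by rw [setLIntegral_Ioi_comp_add_left, add_zero]
      _ = _ := by
        rw [lintegral_indicator measurableSet_Ioi, Measure.restrict_restrict measurableSet_Ioi,
          inter_eq_left.2 (Ioi_subset_Ioi ht.le)]
  have hmeas (t : ℝ) : Measurable ((Ioi t).indicator (F t)) := by
    refine Measurable.indicator ?_ measurableSet_Ioi
    fun_prop
  have hbound : ∀ᶠ t in 𝓝[>] 0, ∀ᵐ y ∂volume.restrict (Ioi 0),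
      (Ioi t).indicator (F t) y ≤ ENNReal.ofReal (w y) * ‖g y‖ₑ ^ 2 := by
    filter_upwards [self_mem_nhdsWithin] with t (ht : 0 < t)
    refine Eventually.of_forall fun y => ?_
    by_cases hy : t < y
    · rw [indicator_of_mem (show y ∈ Ioi t from hy)]
      exact mul_le_mul_left
        (ofReal_sq_sqrt_sub_sqrt_le (hwmono (sub_pos.2 hy) (ht.trans hy) (sub_le_self y ht.le))) _
    · rw [indicator_of_notMem (show y ∉ Ioi t from hy)]
      exact zero_le
  have hlim : ∀ᵐ y ∂volume.restrict (Ioi 0),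
      Tendsto (fun t => (Ioi t).indicator (F t) y) (𝓝[>] 0) (𝓝 0) := by
    filter_upwards [ae_restrict_mem measurableSet_Ioi,
      hwmono.ae_restrict_continuousAt isOpen_Ioi] with y (hy : 0 < y) hcont
    have hF0 : Tendsto (fun t => F t y) (𝓝[>] 0) (𝓝 0) := by
      simpa using ENNReal.Tendsto.mul_const (b := ‖g y‖ₑ ^ 2)
        (tendsto_nhdsWithin_of_tendsto_nhds hcont.tendsto_ofReal_sq_sqrt_sub_sqrt_comp_sub)
        (Or.inr (by simp))
    refine hF0.congr' ?_
    filter_upwards [Ioo_mem_nhdsGT hy] with t ht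
    rw [indicator_of_mem (show y ∈ Ioi t from ht.2)]
  have hdom := tendsto_lintegral_filter_of_dominated_convergence _
    (Eventually.of_forall hmeas) hbound hfin hlim
  rw [lintegral_zero] at hdom
  refine hdom.congr' ?_
  filter_upwards [self_mem_nhdsWithin] with t ht using (hF t ht).symm

section

variable {E : Type*} [NormedAddCommGroup E] [NormedSpace ℝ E]

lemma enorm_sqrt_smul_sq (a : ℝ) (v : E) : ‖√a • v‖ₑ ^ 2 = ENNReal.ofReal a * ‖v‖ₑ ^ 2 := by
  rw [enorm_smul, mul_pow, Real.enorm_eq_ofReal (Real.sqrt_nonneg a), ← ENNReal.ofReal_pow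
    (Real.sqrt_nonneg a), Real.sq_sqrt']
  simp

lemma ofReal_mul_enorm_sub_sq_le (a b : ℝ) (u v : E) :
    ENNReal.ofReal a * ‖u - v‖ₑ ^ 2 ≤
      2 * ‖√b • u - √a • v‖ₑ ^ 2 + 2 * (ENNReal.ofReal ((√b - √a) ^ 2) * ‖u‖ₑ ^ 2) := by
  have hsplit : √a • (u - v) = (√b • u - √a • v) - (√b - √a) • u := by
    rw [smul_sub, sub_smul]; abel
  calc ENNReal.ofReal a * ‖u - v‖ₑ ^ 2 = ‖(√b • u - √a • v) - (√b - √a) • u‖ₑ ^ 2 := by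
        rw [← hsplit, enorm_sqrt_smul_sq]
    _ ≤ (‖√b • u - √a • v‖ₑ + ‖(√b - √a) • u‖ₑ) ^ 2 := by gcongr; exact enorm_sub_le
    _ ≤ 2 * (‖√b • u - √a • v‖ₑ ^ 2 + ‖(√b - √a) • u‖ₑ ^ 2) := by
        simp only [enorm_eq_nnnorm]
        exact_mod_cast add_sq_le (a := ‖√b • u - √a • v‖₊) (b := ‖(√b - √a) • u‖₊)
    _ = _ := by
        rw [mul_add, enorm_smul, mul_pow, Real.enorm_eq_ofReal_abs, ← ENNReal.ofReal_pow
          (abs_nonneg _), sq_abs]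

lemma lintegral_weight_mul_enorm_shift_sub_sq_le {w : ℝ → ℝ} (hwmeas : Measurable w)
    {g G : ℝ → E} (hg : StronglyMeasurable g) (hG : ∀ x > 0, G x = √(w x) • g x) {t : ℝ}
    (ht : 0 < t) :
    ∫⁻ x in Ioi 0, ENNReal.ofReal (w x) * ‖g (t + x) - g x‖ₑ ^ 2 ≤
      2 * eLpNorm (fun x => G (t + x) - G x) 2 ^ 2 + 2 * ∫⁻ x in Ioi 0,
        ENNReal.ofReal ((√(w (t + x)) - √(w x)) ^ 2) * ‖g (t + x)‖ₑ ^ 2 := by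
  have hmeas : Measurable fun x =>
      ENNReal.ofReal ((√(w (t + x)) - √(w x)) ^ 2) * ‖g (t + x)‖ₑ ^ 2 := by
    fun_prop
  calc _ ≤ ∫⁻ x in Ioi 0, (2 * ‖G (t + x) - G x‖ₑ ^ 2 +
          2 * (ENNReal.ofReal ((√(w (t + x)) - √(w x)) ^ 2) * ‖g (t + x)‖ₑ ^ 2)) := by
        refine setLIntegral_mono' measurableSet_Ioi fun x (hx : 0 < x) => ?_
        rw [hG (t + x) (add_pos ht hx), hG x hx]
        exact ofReal_mul_enorm_sub_sq_le _ _ _ _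
    _ = 2 * (∫⁻ x in Ioi 0, ‖G (t + x) - G x‖ₑ ^ 2) + 2 * ∫⁻ x in Ioi 0,
          ENNReal.ofReal ((√(w (t + x)) - √(w x)) ^ 2) * ‖g (t + x)‖ₑ ^ 2 := by
        rw [lintegral_add_right _ (hmeas.const_mul 2), lintegral_const_mul' _ _ (by simp),
          lintegral_const_mul _ hmeas]
    _ ≤ _ := by
        rw [eLpNorm_two_sq]
        gcongr
        exact Measure.restrict_le_self

lemma tendsto_lintegral_weight_mul_enorm_shift_sub_sq_of_stronglyMeasurable {w : ℝ → ℝ}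
    (hwmono : MonotoneOn w (Ioi 0)) (hwmeas : Measurable w) {g : ℝ → E} (hg : StronglyMeasurable g)
    (hfin : ∫⁻ x in Ioi 0, ENNReal.ofReal (w x) * ‖g x‖ₑ ^ 2 ≠ ∞) :
    Tendsto (fun t => ∫⁻ x in Ioi 0, ENNReal.ofReal (w x) * ‖g (t + x) - g x‖ₑ ^ 2)
      (𝓝[>] 0) (𝓝 0) := by
  set G : ℝ → E := (Ioi 0).indicator fun x => √(w x) • g x
  have hGmeas : StronglyMeasurable G :=
    (hwmeas.sqrt.stronglyMeasurable.smul hg).indicator measurableSet_Ioi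
  have hGsq : eLpNorm G 2 ^ 2 = ∫⁻ x in Ioi 0, ENNReal.ofReal (w x) * ‖g x‖ₑ ^ 2 := by
    rw [eLpNorm_two_sq, ← lintegral_indicator measurableSet_Ioi]
    refine lintegral_congr fun x => ?_
    by_cases hx : x ∈ Ioi (0 : ℝ) <;> simp [G, hx, enorm_sqrt_smul_sq]
  have hG : MemLp G 2 := ⟨hGmeas.aestronglyMeasurable,
    (ENNReal.pow_lt_top_iff.1 (hGsq ▸ hfin.lt_top)).resolve_right two_ne_zero⟩
  have hle : ∀ᶠ t in 𝓝[>] 0, ∫⁻ x in Ioi 0, ENNReal.ofReal (w x) * ‖g (t + x) - g x‖ₑ ^ 2 ≤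
      2 * eLpNorm (fun x => G (t + x) - G x) 2 ^ 2 + 2 * ∫⁻ x in Ioi 0,
        ENNReal.ofReal ((√(w (t + x)) - √(w x)) ^ 2) * ‖g (t + x)‖ₑ ^ 2 := by
    filter_upwards [self_mem_nhdsWithin] with t (ht : 0 < t)
    exact lintegral_weight_mul_enorm_shift_sub_sq_le hwmeas hg
      (fun x (hx : 0 < x) => indicator_of_mem hx _) ht
  have hlim : Tendsto (fun t => 2 * eLpNorm (fun x => G (t + x) - G x) 2 ^ 2 + 2 * ∫⁻ x in Ioi 0,
      ENNReal.ofReal ((√(w (t + x)) - √(w x)) ^ 2) * ‖g (t + x)‖ₑ ^ 2) (𝓝[>] 0) (𝓝 0) := by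
    have hT : Tendsto (fun t => eLpNorm (fun x => G (t + x) - G x) 2 ^ 2) (𝓝[>] 0) (𝓝 0) := by
      simpa using ENNReal.Tendsto.pow (n := 2) (tendsto_nhdsWithin_of_tendsto_nhds
        (tendsto_eLpNorm_comp_add_left_sub ENNReal.ofNat_ne_top hG))
    have hD := tendsto_lintegral_sqrt_weight_shift_sub_sq hwmono hwmeas hg hfin
    simpa using (ENNReal.Tendsto.const_mul hT (by simp)).add
      (ENNReal.Tendsto.const_mul hD (by simp))
  exact tendsto_of_tendsto_of_tendsto_of_le_of_le' tendsto_const_nhds hlim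
    (Eventually.of_forall fun _ => zero_le) hle

theorem tendsto_lintegral_weight_mul_enorm_shift_sub_sq {w : ℝ → ℝ} (hwmono : MonotoneOn w (Ioi 0))
    (hwmeas : Measurable w) {g : ℝ → E} (hg : AEStronglyMeasurable g (volume.restrict (Ioi 0)))
    (hfin : ∫⁻ x in Ioi 0, ENNReal.ofReal (w x) * ‖g x‖ₑ ^ 2 ≠ ∞) :
    Tendsto (fun t => ∫⁻ x in Ioi 0, ENNReal.ofReal (w x) * ‖g (t + x) - g x‖ₑ ^ 2)
      (𝓝[>] 0) (𝓝 0) := by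
  have hae : ∀ᵐ x ∂volume.restrict (Ioi 0), g x = hg.mk g x := hg.ae_eq_mk
  have hfin' : ∫⁻ x in Ioi 0, ENNReal.ofReal (w x) * ‖hg.mk g x‖ₑ ^ 2 ≠ ∞ := by
    rwa [← lintegral_congr_ae (μ := volume.restrict (Ioi 0))
      (f := fun x => ENNReal.ofReal (w x) * ‖g x‖ₑ ^ 2) (hae.mono fun x hx => by simp only [hx])]
  refine (tendsto_lintegral_weight_mul_enorm_shift_sub_sq_of_stronglyMeasurable hwmono hwmeas
    hg.stronglyMeasurable_mk hfin').congr' ?_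
  filter_upwards [self_mem_nhdsWithin] with t (ht : 0 < t)
  refine lintegral_congr_ae ?_
  filter_upwards [hae, ae_restrict_Ioi_comp_add_left (p := fun x => g x = hg.mk g x) ht.le hae]
    with x hx htx
  rw [hx, htx]

lemma HasWeakDeriv.tendsto_nhdsGT_zero {f f' : ℝ → E} (hf : HasWeakDeriv f f') :
    Tendsto f (𝓝[>] 0) (𝓝 (f 0)) := by
  have hprim : ContinuousWithinAt (fun x => f 0 + ∫ y in (0 : ℝ)..x, f' y) (Icc 0 1) 0 := by
    refine continuousWithinAt_const.add ?_
    have := intervalIntegral.continuousOn_primitive_interval (a := (0 : ℝ)) (b := 1)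
      (by simpa [uIcc_of_le zero_le_one] using hf.1 1 zero_le_one)
    simpa [uIcc_of_le zero_le_one] using this 0 (by simp)
  have hcont : ContinuousWithinAt f (Icc 0 1) 0 := by
    refine hprim.congr (fun x hx => ?_) (by simp)
    rw [hf.2 x hx.1, intervalIntegral.integral_of_le hx.1]
  exact hcont.mono_of_mem_nhdsWithin (Icc_mem_nhdsGT zero_lt_one)

lemma HasWeakDeriv.aestronglyMeasurable_restrict_Ioi {f f' : ℝ → E} (hf : HasWeakDeriv f f') :
    AEStronglyMeasurable f' (volume.restrict (Ioi 0)) := by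
  have hIcc : AEStronglyMeasurable f' (volume.restrict (⋃ n : ℕ, Icc (0 : ℝ) n)) :=
    aestronglyMeasurable_iUnion_iff.2 fun n => (hf.1 n n.cast_nonneg).aestronglyMeasurable
  refine hIcc.mono_measure (Measure.restrict_mono (fun x (hx : 0 < x) => ?_) le_rfl)
  exact mem_iUnion.2 ⟨⌈x⌉₊, hx.le, Nat.le_ceil x⟩

end

theorem stmt_7_general {H : Type*} [NormedAddCommGroup H] [InnerProductSpace ℝ H]
    (w : ℝ → ℝ) (hwmono : MonotoneOn w (Ici 0)) (hwmeas : Measurable w)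
    (f f' : ℝ → H) (hf : HasWeakDeriv f f') (hfin : wNormSq w (f 0) f' < ⊤) :
    Tendsto (fun t : ℝ => wNormSq w (f t - f 0) (fun x => f' (t + x) - f' x))
      (𝓝[>] (0 : ℝ)) (𝓝 0) := by
  have hvalue : Tendsto (fun t => ‖f t - f 0‖ₑ ^ 2) (𝓝[>] 0) (𝓝 0) := by
    simpa using ENNReal.Tendsto.pow (n := 2) (hf.tendsto_nhdsGT_zero.sub_const (f 0)).enorm
  have hderiv := tendsto_lintegral_weight_mul_enorm_shift_sub_sq
    (hwmono.mono Ioi_subset_Ici_self) hwmeas hf.aestronglyMeasurable_restrict_Ioi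
    (ne_top_of_le_ne_top hfin.ne le_add_self)
  simpa only [wNormSq, ← enorm_eq_nnnorm, add_zero] using hvalue.add hderiv

/-- Lemma 3.5. If `∫₀^∞ w⁻¹ < ∞`, the right-shift semigroup `S_t f = f(t + ·)`
is strongly continuous on `H_w`: for every `f ∈ H_w`, `‖S_t f − f‖_w → 0` as `t ↓ 0` (stated
here for the squared norm `‖S_t f − f‖²_w = |f(t) − f(0)|² + ∫₀^∞ w(x)|f'(t+x) − f'(x)|² dx`). -/
theorem stmt_7 {H : Type*} [NormedAddCommGroup H] [InnerProductSpace ℝ H] [CompleteSpace H]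
    [SecondCountableTopology H]
    (w : ℝ → ℝ) (hwmono : MonotoneOn w (Ici 0)) (hw0 : w 0 = 1)
    (hw1 : ∀ x : ℝ, 0 ≤ x → 1 ≤ w x) (hwmeas : Measurable w)
    (hc : (∫⁻ x in Ioi (0 : ℝ), ENNReal.ofReal (w x)⁻¹) < ⊤)
    (f f' : ℝ → H) (hf : HasWeakDeriv f f') (hfin : wNormSq w (f 0) f' < ⊤) :
    Tendsto (fun t : ℝ => wNormSq w (f t - f 0) (fun x => f' (t + x) - f' x))
      (𝓝[>] (0 : ℝ)) (𝓝 0) :=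
  stmt_7_general w hwmono hwmeas f f' hf hfin
end

section
/- Assume additionally that w is continuously differentiable. Then the set D₀ := { f : [0,∞) → H : f is twice continuously (Fréchet) differentiable and f' is continuously differentiable with compact support } is contained in H_w and is dense in H_w with respect to the norm ‖·‖_w. -/
open MeasureTheory Filter Set
open scoped ENNReal NNReal Topology

/-! Via `f ↦ (f(0), f')`, the space `H_w` is `H × L²((0, ∞), w(x) dx; H)`. As `w` is monotone, the
measure `w(x) dx` is finite on compacts, so smooth compactly supported functions are dense in this
`L²` space; integrating such an approximation `h` of `f'` from the value `f(0)` gives an element of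
`D₀` whose distance to `f` is `‖f' - h‖`. -/

noncomputable def weightMeasure (w : ℝ → ℝ) : Measure ℝ :=
  (volume.restrict (Ioi 0)).withDensity fun x => ENNReal.ofReal (w x)

lemma isFiniteMeasureOnCompacts_weightMeasure {w : ℝ → ℝ} (hw : MonotoneOn w (Ici 0)) :
    IsFiniteMeasureOnCompacts (weightMeasure w) := by
  refine ⟨fun K hK => ?_⟩
  obtain ⟨R, hKR⟩ := hK.isBounded.subset_closedBall 0
  rw [Real.closedBall_eq_Icc, zero_sub, zero_add] at hKR
  have hIcc : Icc (-R) R ∩ Ioi 0 ⊆ Icc 0 R := fun x hx => ⟨le_of_lt hx.2, hx.1.2⟩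
  calc weightMeasure w K ≤ weightMeasure w (Icc (-R) R) := measure_mono hKR
    _ = ∫⁻ x in Icc (-R) R ∩ Ioi 0, ENNReal.ofReal (w x) := by
      rw [weightMeasure, withDensity_apply _ measurableSet_Icc,
        Measure.restrict_restrict measurableSet_Icc]
    _ ≤ ∫⁻ x in Icc 0 R, ENNReal.ofReal (w x) := lintegral_mono_set hIcc
    _ < ⊤ := ((hw.mono Icc_subset_Ici_self).integrableOn_isCompact isCompact_Icc).lintegral_lt_top

lemma sq_eLpNorm_two_eq_lintegral {α E : Type*} [MeasurableSpace α] [NormedAddCommGroup E]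
    (μ : Measure α) (u : α → E) : eLpNorm u 2 μ ^ 2 = ∫⁻ x, ‖u x‖ₑ ^ 2 ∂μ := by
  rw [eLpNorm_eq_lintegral_rpow_enorm_toReal two_ne_zero ENNReal.ofNat_ne_top,
    ← ENNReal.rpow_natCast, ← ENNReal.rpow_mul]
  norm_num

section

variable {H : Type*} [NormedAddCommGroup H]

lemma wNormSq_eq {w : ℝ → ℝ} (hw : AEMeasurable w (volume.restrict (Ioi 0))) (a : H)
    (u : ℝ → H) : wNormSq w a u = ‖a‖ₑ ^ 2 + eLpNorm u 2 (weightMeasure w) ^ 2 := by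
  rw [wNormSq, sq_eLpNorm_two_eq_lintegral, weightMeasure,
    lintegral_withDensity_eq_lintegral_mul_non_measurable₀ _ hw.ennreal_ofReal
      (ae_of_all _ fun _ => ENNReal.ofReal_lt_top)]
  rfl

lemma wNormSq_lt_top_iff_memLp {w : ℝ → ℝ} (hw : AEMeasurable w (volume.restrict (Ioi 0)))
    (a : H) {u : ℝ → H} (hu : AEStronglyMeasurable u (weightMeasure w)) :
    wNormSq w a u < ⊤ ↔ MemLp u 2 (weightMeasure w) := by
  rw [wNormSq_eq hw, ENNReal.add_lt_top, and_iff_right (by simp), ENNReal.pow_lt_top_iff,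
    or_iff_left two_ne_zero]
  exact (and_iff_right hu).symm

end

section

variable {H : Type*} [NormedAddCommGroup H] [NormedSpace ℝ H]

lemma HasWeakDeriv.aestronglyMeasurable {f f' : ℝ → H} (hf : HasWeakDeriv f f') :
    AEStronglyMeasurable f' (volume.restrict (Ioi 0)) := by
  have hcover : Ioi (0 : ℝ) ⊆ ⋃ n : ℕ, Icc 0 n := fun x hx =>
    mem_iUnion.2 ((exists_nat_ge x).imp fun _ hn => ⟨le_of_lt hx, hn⟩)
  exact (aestronglyMeasurable_iUnion_iff.2 fun n : ℕ => (hf.1 n n.cast_nonneg).1).mono_set hcover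

variable [CompleteSpace H]

lemma hasWeakDeriv_deriv {g : ℝ → H} (hg : ContDiff ℝ 1 g) : HasWeakDeriv g (deriv g) := by
  have hd := hg.continuous_deriv le_rfl
  refine ⟨fun x _ => hd.integrableOn_Icc, fun x hx => ?_⟩
  rw [← intervalIntegral.integral_of_le hx, intervalIntegral.integral_deriv_eq_sub
    (fun y _ => (hg.differentiable one_ne_zero).differentiableAt) (hd.intervalIntegrable _ _)]
  abel

lemma exists_contDiff_succ_deriv_eq {n : ℕ∞} {h : ℝ → H} (hh : ContDiff ℝ n h) (a : H) :
    ∃ G : ℝ → H, ContDiff ℝ (n + 1) G ∧ deriv G = h ∧ G 0 = a := by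
  have hG (x : ℝ) : HasDerivAt (fun x => a + ∫ t in (0 : ℝ)..x, h t) (h x) x :=
    (hh.continuous.integral_hasStrictDerivAt 0 x).hasDerivAt.const_add a
  have hGd : deriv (fun x => a + ∫ t in (0 : ℝ)..x, h t) = h := funext fun x => (hG x).deriv
  refine ⟨_, contDiff_succ_iff_deriv.2 ⟨fun x => (hG x).differentiableAt, by simp, ?_⟩, hGd,
    by simp⟩
  rwa [hGd]

end

theorem stmt_9_general {H : Type*} [NormedAddCommGroup H] [InnerProductSpace ℝ H] [CompleteSpace H]
    (w : ℝ → ℝ) (hwmono : MonotoneOn w (Ici 0)) :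
    (∀ g : ℝ → H, ContDiff ℝ 2 g → HasCompactSupport (deriv g) →
        HasWeakDeriv g (deriv g) ∧ wNormSq w (g 0) (deriv g) < ⊤)
      ∧ ∀ f f' : ℝ → H, HasWeakDeriv f f' → wNormSq w (f 0) f' < ⊤ →
          ∀ ε : ℝ, 0 < ε → ∃ g : ℝ → H, ContDiff ℝ 2 g ∧ HasCompactSupport (deriv g) ∧
            wNormSq w (f 0 - g 0) (fun x => f' x - deriv g x) < ENNReal.ofReal (ε ^ 2) := by
  have hw : AEMeasurable w (volume.restrict (Ioi 0)) :=
    aemeasurable_restrict_of_monotoneOn measurableSet_Ioi (hwmono.mono Ioi_subset_Ici_self)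
  have := isFiniteMeasureOnCompacts_weightMeasure hwmono
  refine ⟨fun g hg hsupp => ?_, fun f f' hf hfin ε hε => ?_⟩
  · have hcont : Continuous (deriv g) := hg.continuous_deriv one_le_two
    refine ⟨hasWeakDeriv_deriv (hg.of_le one_le_two), ?_⟩
    rw [wNormSq_lt_top_iff_memLp hw _ hcont.aestronglyMeasurable]
    exact hcont.memLp_of_hasCompactSupport hsupp
  · have hmem : MemLp f' 2 (weightMeasure w) := (wNormSq_lt_top_iff_memLp hw _
      (hf.aestronglyMeasurable.mono_ac (withDensity_absolutelyContinuous _ _))).1 hfin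
    obtain ⟨h, hhsupp, hhsmooth, hclose⟩ :=
      hmem.exist_eLpNorm_sub_le (by simp) one_le_two (half_pos hε)
    obtain ⟨G, hG, hGd, hG0⟩ := exists_contDiff_succ_deriv_eq hhsmooth (f 0)
    refine ⟨G, hG.of_le (by norm_cast), hGd ▸ hhsupp, ?_⟩
    rw [hG0, hGd, sub_self, wNormSq_eq hw]
    calc ‖(0 : H)‖ₑ ^ 2 + eLpNorm (f' - h) 2 (weightMeasure w) ^ 2
        ≤ ENNReal.ofReal (ε / 2) ^ 2 := by
          rw [enorm_zero, zero_pow two_ne_zero, zero_add]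
          gcongr
      _ = ENNReal.ofReal ((ε / 2) ^ 2) := (ENNReal.ofReal_pow (by positivity) 2).symm
      _ < ENNReal.ofReal (ε ^ 2) :=
          (ENNReal.ofReal_lt_ofReal_iff (by positivity)).2 (by nlinarith)

/-- If `w` is in addition continuously differentiable, then the set
`D₀ = {f : twice continuously differentiable with `f'` continuously differentiable of compact
support}` is contained in `H_w` and is dense in `H_w` for the norm `‖·‖_w`. -/
theorem stmt_9 {H : Type*} [NormedAddCommGroup H] [InnerProductSpace ℝ H] [CompleteSpace H]
    [SecondCountableTopology H]
    (w : ℝ → ℝ) (hwmono : MonotoneOn w (Ici 0)) (hw0 : w 0 = 1)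
    (hw1 : ∀ x : ℝ, 0 ≤ x → 1 ≤ w x)
    (hwC1 : ContDiffOn ℝ 1 w (Ici 0)) :
    (∀ g : ℝ → H, ContDiff ℝ 2 g → HasCompactSupport (deriv g) →
        HasWeakDeriv g (deriv g) ∧ wNormSq w (g 0) (deriv g) < ⊤)
      ∧ ∀ f f' : ℝ → H, HasWeakDeriv f f' → wNormSq w (f 0) f' < ⊤ →
          ∀ ε : ℝ, 0 < ε → ∃ g : ℝ → H, ContDiff ℝ 2 g ∧ HasCompactSupport (deriv g) ∧
            wNormSq w (f 0 - g 0) (fun x => f' x - deriv g x) < ENNReal.ofReal (ε ^ 2) :=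
  stmt_9_general w hwmono
end

section
/- Assume c² := ∫₀^∞ w(x)⁻¹ dx < ∞. Let 𝓛 be a continuous linear functional on H with Riesz representative z ∈ H (i.e. 𝓛(v) = (v, z)_H for all v ∈ H). For x ≥ 0 define h_x(y) := 1 + ∫₀^{min(x,y)} w(u)⁻¹ du and ℓ_x(y) := h_x(y) · z. Then ℓ_x ∈ H_w and for every g ∈ H_w one has 𝓛(g(x)) = ⟨g, ℓ_x⟩_w. -/
open MeasureTheory Filter Set
open scoped ENNReal NNReal Topology

open scoped RealInnerProductSpace

/-!
Write `h_x' = 1_{(0,x]} w⁻¹` for the weak derivative of `h_x`. The weight cancels in the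
`H_w` inner product: `w · (g', h_x' z)_H = 1_{(0,x]} (g', z)_H`, so
`⟨g, ℓ_x⟩_w = (g(0), z)_H + ∫₀ˣ (g', z)_H = (g(x), z)_H = 𝓛(g(x))`, the middle step by the
fundamental theorem of calculus for `g` and pulling `(·, z)_H` through the Bochner integral.
Likewise `w |h_x' z|² ≤ w⁻¹ |z|²`, so `‖ℓ_x‖_w² ≤ |z|² (1 + c²) < ∞`.
-/

theorem HasWeakDeriv.smul_const {E : Type*} [NormedAddCommGroup E] [NormedSpace ℝ E]
    [CompleteSpace E] {φ φ' : ℝ → ℝ} (hφ : HasWeakDeriv φ φ') (z : E) :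
    HasWeakDeriv (fun y => φ y • z) (fun y => φ' y • z) :=
  ⟨fun x hx => (hφ.1 x hx).smul_const z, fun x hx => by
    dsimp only
    rw [integral_smul_const, hφ.2 x hx, add_smul]⟩

theorem hasWeakDeriv_const_add_integral_Ioc_min {E : Type*} [NormedAddCommGroup E]
    [NormedSpace ℝ E] {f : ℝ → E} {x : ℝ} (hf : IntegrableOn f (Ioc 0 x)) (c : E) :
    HasWeakDeriv (fun y => c + ∫ u in Ioc (0 : ℝ) (min x y), f u) ((Ioc 0 x).indicator f) := by
  refine ⟨fun y _ => ?_, fun y _ => ?_⟩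
  · exact (hf.integrable_indicator measurableSet_Ioc).integrableOn
  · have hempty : Ioc (0 : ℝ) (min x 0) = ∅ := Ioc_eq_empty (min_le_right x 0).not_gt
    dsimp only
    rw [setIntegral_indicator measurableSet_Ioc, Ioc_inter_Ioc, max_self, inf_comm, hempty,
      setIntegral_empty, add_zero]

theorem inner_eq_inner_add_integral_of_hasWeakDeriv {H : Type*} [NormedAddCommGroup H]
    [InnerProductSpace ℝ H] [CompleteSpace H] {g g' : ℝ → H} (hg : HasWeakDeriv g g')
    {x : ℝ} (hx : 0 ≤ x) (z : H) :
    ⟪g x, z⟫ = ⟪g 0, z⟫ + ∫ y in Ioc (0 : ℝ) x, ⟪g' y, z⟫ := by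
  have hint : IntegrableOn g' (Ioc 0 x) := (hg.1 x hx).mono_set Ioc_subset_Icc_self
  simp_rw [real_inner_comm z]
  rw [integral_inner hint, hg.2 x hx, inner_add_right]

theorem weight_mul_inner_indicator_inv_smul {H : Type*} [NormedAddCommGroup H]
    [InnerProductSpace ℝ H] {w : ℝ → ℝ} {s : Set ℝ} {y : ℝ} (hw : y ∈ s → w y ≠ 0)
    (g' : ℝ → H) (z : H) :
    w y * ⟪g' y, (s.indicator (fun u => (w u)⁻¹) y) • z⟫ = s.indicator (fun u => ⟪g' u, z⟫) y := by
  by_cases hy : y ∈ s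
  · rw [indicator_of_mem hy, indicator_of_mem hy, real_inner_smul_right,
      mul_inv_cancel_left₀ (hw hy)]
  · simp [indicator_of_notMem hy]

theorem setIntegral_weight_mul_inner_indicator_inv_smul {H : Type*} [NormedAddCommGroup H]
    [InnerProductSpace ℝ H] {w : ℝ → ℝ} {x : ℝ} (hw : ∀ y ∈ Ioc 0 x, w y ≠ 0) (g' : ℝ → H)
    (z : H) :
    ∫ y in Ioi (0 : ℝ), w y * ⟪g' y, ((Ioc (0 : ℝ) x).indicator (fun u => (w u)⁻¹) y) • z⟫
      = ∫ y in Ioc (0 : ℝ) x, ⟪g' y, z⟫ := by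
  simp_rw [weight_mul_inner_indicator_inv_smul (hw _)]
  rw [setIntegral_indicator measurableSet_Ioc, inter_eq_right.2 Ioc_subset_Ioi_self]

theorem ofReal_mul_nnnorm_indicator_inv_smul_sq_le {H : Type*} [NormedAddCommGroup H]
    [NormedSpace ℝ H] {w : ℝ → ℝ} {s : Set ℝ} {y : ℝ} (hw : y ∈ s → 0 < w y) (z : H) :
    ENNReal.ofReal (w y) * (‖(s.indicator (fun u => (w u)⁻¹) y) • z‖₊ : ℝ≥0∞) ^ 2
      ≤ ENNReal.ofReal (w y)⁻¹ * (‖z‖₊ : ℝ≥0∞) ^ 2 := by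
  by_cases hy : y ∈ s
  · have hwy := hw hy
    rw [indicator_of_mem hy, nnnorm_smul, ENNReal.coe_mul, mul_pow, ← mul_assoc, sq, ← mul_assoc,
      ← enorm_eq_nnnorm, Real.enorm_eq_ofReal (inv_nonneg.2 hwy.le),
      ← ENNReal.ofReal_mul hwy.le, mul_inv_cancel₀ hwy.ne', ENNReal.ofReal_one, one_mul]
  · simp [indicator_of_notMem hy]

theorem wNormSq_indicator_inv_smul_lt_top {H : Type*} [NormedAddCommGroup H]
    [NormedSpace ℝ H] {w : ℝ → ℝ} {s : Set ℝ} (hw : ∀ y ∈ s, 0 < w y)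
    (hc : (∫⁻ x in Ioi (0 : ℝ), ENNReal.ofReal (w x)⁻¹) < ⊤) (a z : H) :
    wNormSq w a (fun y => (s.indicator (fun u => (w u)⁻¹) y) • z) < ⊤ := by
  refine ENNReal.add_lt_top.2 ⟨ENNReal.pow_lt_top ENNReal.coe_lt_top, ?_⟩
  have hsq : (‖z‖₊ : ℝ≥0∞) ^ 2 ≠ ⊤ := ENNReal.pow_ne_top ENNReal.coe_ne_top
  calc _ ≤ ∫⁻ y in Ioi (0 : ℝ), ENNReal.ofReal (w y)⁻¹ * (‖z‖₊ : ℝ≥0∞) ^ 2 :=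
        lintegral_mono fun y => ofReal_mul_nnnorm_indicator_inv_smul_sq_le (hw y) z
    _ = (∫⁻ y in Ioi (0 : ℝ), ENNReal.ofReal (w y)⁻¹) * (‖z‖₊ : ℝ≥0∞) ^ 2 :=
        lintegral_mul_const' _ _ hsq
    _ < ⊤ := ENNReal.mul_lt_top hc hsq.lt_top

theorem stmt_11_general {H : Type*} [NormedAddCommGroup H] [InnerProductSpace ℝ H] [CompleteSpace H]
    (w : ℝ → ℝ)
    (hw1 : ∀ x : ℝ, 0 ≤ x → 1 ≤ w x) (hwmeas : Measurable w)
    (hc : (∫⁻ x in Ioi (0 : ℝ), ENNReal.ofReal (w x)⁻¹) < ⊤)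
    (L : H →L[ℝ] ℝ) (z : H) (hLz : ∀ v : H, L v = ⟪v, z⟫)
    (x : ℝ) (hx : 0 ≤ x) :
    HasWeakDeriv (fun y => (1 + ∫ u in Ioc (0 : ℝ) (min x y), (w u)⁻¹) • z)
        (fun y => ((Ioc (0 : ℝ) x).indicator (fun u => (w u)⁻¹) y) • z)
      ∧ wNormSq w ((1 + ∫ u in Ioc (0 : ℝ) (min x 0), (w u)⁻¹) • z)
          (fun y => ((Ioc (0 : ℝ) x).indicator (fun u => (w u)⁻¹) y) • z) < ⊤
      ∧ ∀ g g' : ℝ → H, HasWeakDeriv g g' → wNormSq w (g 0) g' < ⊤ →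
          L (g x)
            = ⟪g 0, (1 + ∫ u in Ioc (0 : ℝ) (min x 0), (w u)⁻¹) • z⟫
              + ∫ y in Ioi (0 : ℝ),
                  w y * ⟪g' y, ((Ioc (0 : ℝ) x).indicator (fun u => (w u)⁻¹) y) • z⟫ := by
  have hwpos : ∀ y ∈ Ioc (0 : ℝ) x, 0 < w y := fun y hy =>
    zero_lt_one.trans_le (hw1 y hy.1.le)
  have hinv : IntegrableOn (fun u => (w u)⁻¹) (Ioc 0 x) := by
    refine Measure.integrableOn_of_bounded (M := 1) measure_Ioc_lt_top.ne
      hwmeas.inv.aestronglyMeasurable ((ae_restrict_iff' measurableSet_Ioc).2 ?_)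
    filter_upwards with y hy
    rw [norm_inv, Real.norm_of_nonneg (hwpos y hy).le]
    exact inv_le_one_of_one_le₀ (hw1 y hy.1.le)
  have hval0 : 1 + ∫ u in Ioc (0 : ℝ) (min x 0), (w u)⁻¹ = 1 := by simp [hx]
  refine ⟨(hasWeakDeriv_const_add_integral_Ioc_min hinv 1).smul_const z,
    wNormSq_indicator_inv_smul_lt_top hwpos hc _ z, fun g g' hg _ => ?_⟩
  rw [hval0, one_smul, setIntegral_weight_mul_inner_indicator_inv_smul
    (fun y hy => (hwpos y hy).ne'), hLz, inner_eq_inner_add_integral_of_hasWeakDeriv hg hx]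

/-- Assume `∫₀^∞ w⁻¹ < ∞`. Let `𝓛 ∈ H*` have Riesz representative `z`, and
for `x ≥ 0` set `h_x(y) = 1 + ∫₀^{x∧y} w⁻¹` and `ℓ_x(y) = h_x(y) z` (whose weak derivative is
`y ↦ 1_{(0,x]}(y) w(y)⁻¹ z`). Then `ℓ_x ∈ H_w` and `𝓛(g(x)) = ⟨g, ℓ_x⟩_w` for all `g ∈ H_w`. -/
theorem stmt_11 {H : Type*} [NormedAddCommGroup H] [InnerProductSpace ℝ H] [CompleteSpace H]
    [SecondCountableTopology H]
    (w : ℝ → ℝ) (hwmono : MonotoneOn w (Ici 0)) (hw0 : w 0 = 1)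
    (hw1 : ∀ x : ℝ, 0 ≤ x → 1 ≤ w x) (hwmeas : Measurable w)
    (hc : (∫⁻ x in Ioi (0 : ℝ), ENNReal.ofReal (w x)⁻¹) < ⊤)
    (L : H →L[ℝ] ℝ) (z : H) (hLz : ∀ v : H, L v = ⟪v, z⟫)
    (x : ℝ) (hx : 0 ≤ x) :
    HasWeakDeriv (fun y => (1 + ∫ u in Ioc (0 : ℝ) (min x y), (w u)⁻¹) • z)
        (fun y => ((Ioc (0 : ℝ) x).indicator (fun u => (w u)⁻¹) y) • z)
      ∧ wNormSq w ((1 + ∫ u in Ioc (0 : ℝ) (min x 0), (w u)⁻¹) • z)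
          (fun y => ((Ioc (0 : ℝ) x).indicator (fun u => (w u)⁻¹) y) • z) < ⊤
      ∧ ∀ g g' : ℝ → H, HasWeakDeriv g g' → wNormSq w (g 0) g' < ⊤ →
          L (g x)
            = ⟪g 0, (1 + ∫ u in Ioc (0 : ℝ) (min x 0), (w u)⁻¹) • z⟫
              + ∫ y in Ioi (0 : ℝ),
                  w y * ⟪g' y, ((Ioc (0 : ℝ) x).indicator (fun u => (w u)⁻¹) y) • z⟫ :=
  stmt_11_general w hw1 hwmeas hc L z hLz x hx
end

section
/- Let t > 0, m ≥ 1, Δt := t/m, and suppose Δt ≤ Δx. Let Y₀, Ỹ₀ ∈ H̃, and assume the Lipschitz condition |S_x Y₀ − S_y Y₀|_{H̃} ≤ C₀ |x − y| for all x, y ≥ 0, where C₀ > 0 is a constant. Then, with T := Id + (Δt/Δx)(S_{Δx} − Id) and M := sup_{0 ≤ u ≤ mΔx} ‖S_u‖_op, one has |T^m Ỹ₀ − S_t Y₀|_{H̃} ≤ C₀ √(t (Δx − Δt)) + M |Ỹ₀ − Y₀|_{H̃}. -/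
/-!
Write `T = (1 - λ) Id + λ S_{Δx}` with `λ = Δt/Δx ∈ [0, 1]`. By the binomial theorem and the
semigroup law, `T^m = ∑ₖ bₖ S_{kΔx}`, where `bₖ = C(m,k) λᵏ (1-λ)^{m-k}` are the binomial
weights. Hence `T^m Ỹ₀ - S_t Y₀` is the average over `k` of `S_{kΔx}(Ỹ₀ - Y₀)` (bounded by
`M |Ỹ₀ - Y₀|`) plus `S_{kΔx} Y₀ - S_t Y₀` (bounded by `C₀ |kΔx - t|`). Since `t = mλΔx` is the
mean of `kΔx`, Cauchy–Schwarz bounds the average of `|kΔx - t|` by the standard deviation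
`√(mλ(1-λ)) Δx = √(t (Δx - Δt))`.
-/

section

open Finset Polynomial

lemma bernsteinPolynomial_eval_nonneg (n ν : ℕ) {p : ℝ} (hp0 : 0 ≤ p) (hp1 : p ≤ 1) :
    0 ≤ (bernsteinPolynomial ℝ n ν).eval p :=
  bernstein_nonneg (x := ⟨p, hp0, hp1⟩)

lemma sum_bernsteinPolynomial_eval (n : ℕ) (p : ℝ) :
    ∑ k ∈ range (n + 1), (bernsteinPolynomial ℝ n k).eval p = 1 := by
  simpa [eval_finsetSum] using congrArg (eval p) (bernsteinPolynomial.sum ℝ n)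

lemma sum_bernsteinPolynomial_eval_mul_sq_sub (n : ℕ) (p h : ℝ) :
    ∑ k ∈ range (n + 1), (bernsteinPolynomial ℝ n k).eval p * (k * h - n * p * h) ^ 2
      = n * p * (1 - p) * h ^ 2 := by
  have hvar := congrArg (eval p) (bernsteinPolynomial.variance ℝ n)
  simp only [eval_finsetSum, eval_mul, eval_pow, eval_sub, eval_X, eval_natCast,
    eval_one, nsmul_eq_mul] at hvar
  rw [← hvar, sum_mul]
  refine sum_congr rfl fun k _ => ?_
  ring

lemma one_add_smul_sub_one_pow_eq_sum {R A : Type*} [CommRing R] [Ring A] [Algebra R A]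
    (p : R) (a : A) (n : ℕ) :
    (1 + p • (a - 1)) ^ n = ∑ k ∈ range (n + 1), (bernsteinPolynomial R n k).eval p • a ^ k := by
  have hsplit : 1 + p • (a - 1) = p • a + algebraMap R A (1 - p) := by
    rw [Algebra.algebraMap_eq_smul_one, smul_sub, sub_smul, one_smul]; abel
  have hc : Commute (p • a) (algebraMap R A (1 - p)) := (Algebra.commutes _ _).symm
  rw [hsplit, hc.add_pow]
  refine sum_congr rfl fun k _ => ?_
  rw [_root_.smul_pow, ← map_pow, ← Algebra.commutes, ← Algebra.smul_def, smul_smul,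
    ← Nat.cast_comm, ← nsmul_eq_mul, ← Nat.cast_smul_eq_nsmul R, smul_smul]
  congr 1
  simp only [bernsteinPolynomial, eval_mul, eval_pow, eval_sub, eval_X, eval_natCast, eval_one]
  ring

lemma pow_eq_natCast_mul_of_map_add {A : Type*} [Monoid A] {S : ℝ → A} (h0 : S 0 = 1)
    (hadd : ∀ u v : ℝ, 0 ≤ u → 0 ≤ v → S (u + v) = S u * S v) {h : ℝ} (hh : 0 ≤ h) (k : ℕ) :
    S h ^ k = S (k * h) := by
  induction k with
  | zero => simp [h0]
  | succ k ih =>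
    rw [pow_succ, ih, ← hadd _ _ (by positivity) hh]
    push_cast; ring_nf

lemma sum_mul_abs_le_sqrt_sum_mul_sq {ι : Type*} {s : Finset ι} {w f : ι → ℝ}
    (hw0 : ∀ i ∈ s, 0 ≤ w i) (hw1 : ∑ i ∈ s, w i = 1) :
    ∑ i ∈ s, w i * |f i| ≤ √(∑ i ∈ s, w i * f i ^ 2) := by
  refine Real.le_sqrt_of_sq_le ?_
  simpa [hw1] using sum_sq_le_sum_mul_sum_of_sq_le_mul s hw0
    (fun i hi => mul_nonneg (hw0 i hi) (sq_nonneg (f i)))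
    (fun i _ => (by rw [mul_pow, sq_abs]; ring : (w i * |f i|) ^ 2 = w i * (w i * f i ^ 2)).le)

lemma norm_sum_smul_sub_le {E ι : Type*} [SeminormedAddCommGroup E] [NormedSpace ℝ E]
    {s : Finset ι} {w : ι → ℝ} (hw0 : ∀ i ∈ s, 0 ≤ w i) (hw1 : ∑ i ∈ s, w i = 1)
    (v : ι → E) (z : E) :
    ‖∑ i ∈ s, w i • v i - z‖ ≤ ∑ i ∈ s, w i * ‖v i - z‖ := by
  calc ‖∑ i ∈ s, w i • v i - z‖ = ‖∑ i ∈ s, w i • (v i - z)‖ := by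
        simp_rw [smul_sub, sum_sub_distrib, ← sum_smul, hw1, one_smul]
    _ ≤ ∑ i ∈ s, w i * ‖v i - z‖ := by
        refine (norm_sum_le _ _).trans (sum_le_sum fun i hi => ?_)
        rw [norm_smul, Real.norm_of_nonneg (hw0 i hi)]

lemma norm_sum_smul_apply_sub_le {E ι : Type*} [SeminormedAddCommGroup E] [NormedSpace ℝ E]
    {s : Finset ι} {w : ι → ℝ} (hw0 : ∀ i ∈ s, 0 ≤ w i) (hw1 : ∑ i ∈ s, w i = 1)
    {A : ι → E →L[ℝ] E} {M : ℝ} (hA : ∀ i ∈ s, ‖A i‖ ≤ M) (x y z : E) :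
    ‖(∑ i ∈ s, w i • A i) x - z‖ ≤ ∑ i ∈ s, w i * ‖A i y - z‖ + M * ‖x - y‖ := by
  have hA_apply : ∀ i ∈ s, ‖A i x - z‖ ≤ ‖A i y - z‖ + M * ‖x - y‖ := fun i hi =>
    calc ‖A i x - z‖ ≤ ‖A i (x - y)‖ + ‖A i y - z‖ := by
          rw [map_sub]; exact norm_sub_le_norm_sub_add_norm_sub _ _ _
      _ ≤ ‖A i y - z‖ + M * ‖x - y‖ := by
          rw [add_comm]; gcongr; exact (A i).le_of_opNorm_le (hA i hi) _
  calc ‖(∑ i ∈ s, w i • A i) x - z‖ ≤ ∑ i ∈ s, w i * ‖A i x - z‖ := by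
        simpa only [_root_.sum_apply, smul_apply] using
          norm_sum_smul_sub_le hw0 hw1 (fun i => A i x) z
    _ ≤ ∑ i ∈ s, w i * (‖A i y - z‖ + M * ‖x - y‖) :=
        sum_le_sum fun i hi => mul_le_mul_of_nonneg_left (hA_apply i hi) (hw0 i hi)
    _ = ∑ i ∈ s, w i * ‖A i y - z‖ + M * ‖x - y‖ := by
        simp_rw [mul_add, sum_add_distrib, ← sum_mul, hw1, one_mul]

end

open Set

theorem stmt_15_general {E : Type*} [NormedAddCommGroup E] [InnerProductSpace ℝ E]
    (S : ℝ → E →L[ℝ] E) (hS0 : S 0 = 1)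
    (hSadd : ∀ u v : ℝ, 0 ≤ u → 0 ≤ v → S (u + v) = (S u).comp (S v))
    (hbdd : ∀ r : ℝ, BddAbove ((fun u => ‖S u‖) '' Icc 0 r))
    (t : ℝ) (ht : 0 < t) (m : ℕ) (hm : 1 ≤ m)
    (Δx : ℝ) (hΔx : t / m ≤ Δx)
    (T : E →L[ℝ] E) (hT : T = 1 + (t / m / Δx) • (S Δx - 1))
    (M : ℝ) (hM : M = sSup ((fun u => ‖S u‖) '' Icc (0 : ℝ) (m * Δx)))
    (Y₀ Yt : E) (C₀ : ℝ) (hC₀ : 0 < C₀)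
    (hLip : ∀ x y : ℝ, 0 ≤ x → 0 ≤ y → ‖S x Y₀ - S y Y₀‖ ≤ C₀ * |x - y|) :
    ‖(T ^ m) Yt - S t Y₀‖ ≤ C₀ * Real.sqrt (t * (Δx - t / m)) + M * ‖Yt - Y₀‖ := by
  have hm0 : (0 : ℝ) < m := Nat.cast_pos.2 hm
  have hΔx0 : 0 < Δx := (div_pos ht hm0).trans_le hΔx
  set p := t / m / Δx with hp
  have hp0 : 0 ≤ p := by positivity
  have hp1 : p ≤ 1 := (div_le_one hΔx0).2 hΔx
  set w : ℕ → ℝ := fun k => (bernsteinPolynomial ℝ m k).eval p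
  have hw0 : ∀ k ∈ Finset.range (m + 1), 0 ≤ w k := fun k _ =>
    bernsteinPolynomial_eval_nonneg m k hp0 hp1
  have hw1 : ∑ k ∈ Finset.range (m + 1), w k = 1 := sum_bernsteinPolynomial_eval m p
  have hTm : T ^ m = ∑ k ∈ Finset.range (m + 1), w k • S (k * Δx) := by
    simp only [hT, one_add_smul_sub_one_pow_eq_sum, w,
      pow_eq_natCast_mul_of_map_add hS0 (fun u v hu hv => hSadd u v hu hv) hΔx0.le]
  have hSM : ∀ k ∈ Finset.range (m + 1), ‖S (k * Δx)‖ ≤ M := fun k hk => by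
    have hkm : (k : ℝ) ≤ m := by exact_mod_cast Nat.lt_succ_iff.1 (Finset.mem_range.1 hk)
    exact hM ▸ le_csSup (hbdd _) ⟨k * Δx, ⟨by positivity, by gcongr⟩, rfl⟩
  have hmoment : ∑ k ∈ Finset.range (m + 1), w k * (k * Δx - t) ^ 2 = t * (Δx - t / m) := by
    have ht_eq : t = m * p * Δx := by rw [hp]; field_simp
    rw [ht_eq, sum_bernsteinPolynomial_eval_mul_sq_sub, hp]
    field_simp
  calc ‖(T ^ m) Yt - S t Y₀‖
      ≤ ∑ k ∈ Finset.range (m + 1), w k * ‖S (k * Δx) Y₀ - S t Y₀‖ + M * ‖Yt - Y₀‖ :=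
        hTm ▸ norm_sum_smul_apply_sub_le hw0 hw1 hSM Yt Y₀ (S t Y₀)
    _ ≤ ∑ k ∈ Finset.range (m + 1), w k * (C₀ * |k * Δx - t|) + M * ‖Yt - Y₀‖ := by
        gcongr with k hk
        · exact hw0 k hk
        · exact hLip _ _ (by positivity) ht.le
    _ = C₀ * ∑ k ∈ Finset.range (m + 1), w k * |k * Δx - t| + M * ‖Yt - Y₀‖ := by
        simp only [Finset.mul_sum, mul_left_comm]
    _ ≤ C₀ * Real.sqrt (t * (Δx - t / m)) + M * ‖Yt - Y₀‖ := by
        rw [← hmoment]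
        gcongr
        exact sum_mul_abs_le_sqrt_sum_mul_sq hw0 hw1

/-- Convergence of the iterated finite-difference operator applied to the
approximate initial condition: with `T := Id + (Δt/Δx)(S_{Δx} − Id)`, `Δt = t/m ≤ Δx`, and
`M := sup_{0 ≤ u ≤ mΔx} ‖S_u‖_op`, if `u ↦ S_u Y₀` is Lipschitz with constant `C₀`, then
`|T^m Ỹ₀ − S_t Y₀| ≤ C₀ √(t(Δx − Δt)) + M |Ỹ₀ − Y₀|`. -/
theorem stmt_15 {E : Type*} [NormedAddCommGroup E] [InnerProductSpace ℝ E] [CompleteSpace E]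
    [SecondCountableTopology E]
    (S : ℝ → E →L[ℝ] E) (hS0 : S 0 = 1)
    (hSadd : ∀ u v : ℝ, 0 ≤ u → 0 ≤ v → S (u + v) = (S u).comp (S v))
    (hbdd : ∀ r : ℝ, BddAbove ((fun u => ‖S u‖) '' Icc 0 r))
    (t : ℝ) (ht : 0 < t) (m : ℕ) (hm : 1 ≤ m)
    (Δx : ℝ) (hΔx : t / m ≤ Δx)
    (T : E →L[ℝ] E) (hT : T = 1 + (t / m / Δx) • (S Δx - 1))
    (M : ℝ) (hM : M = sSup ((fun u => ‖S u‖) '' Icc (0 : ℝ) (m * Δx)))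
    (Y₀ Yt : E) (C₀ : ℝ) (hC₀ : 0 < C₀)
    (hLip : ∀ x y : ℝ, 0 ≤ x → 0 ≤ y → ‖S x Y₀ - S y Y₀‖ ≤ C₀ * |x - y|) :
    ‖(T ^ m) Yt - S t Y₀‖ ≤ C₀ * Real.sqrt (t * (Δx - t / m)) + M * ‖Yt - Y₀‖ :=
  stmt_15_general S hS0 hSadd hbdd t ht m hm Δx hΔx T hT M hM Y₀ Yt C₀ hC₀ hLip
end

section
/- Suppose the grid values y_jⁿ ∈ H (j, n ∈ ℕ) satisfy the finite difference recursion y_j^{n+1} = λ y_{j+1}ⁿ + (1 − λ) y_jⁿ + β_jⁿ(ΔLⁿ) for all j, n ≥ 0, where λ := Δt/Δx, β_jⁿ ∈ L(V, H) and ΔLⁿ ∈ V. Define the piecewise linear interpolations Ỹⁿ : [0,∞) → H by Ỹⁿ(x) := y_jⁿ + ((x − jΔx)/Δx)(y_{j+1}ⁿ − y_jⁿ) for x ∈ [jΔx, (j+1)Δx), and for each f ∈ V define β̃ⁿ(f) : [0,∞) → H by β̃ⁿ(f)(x) := β_jⁿ(f) + ((x − jΔx)/Δx)(β_{j+1}ⁿ(f)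 − β_jⁿ(f)) for x ∈ [jΔx, (j+1)Δx). Let T act on H-valued functions F on [0,∞) by (T F)(x) := F(x) + λ (F(x + Δx) − F(x)). Then for every n ≥ 0 and every x ≥ 0: Ỹⁿ(x) = (Tⁿ Ỹ⁰)(x) + Σ_{i=0}^{n−1} (T^{n−1−i} (β̃ⁱ(ΔLⁱ)))(x), where Tⁿ denotes the n-fold composition and T⁰ the identity. -/
open Finset

/-- The piecewise linear interpolation of the grid values `v : ℕ → H` with spatial step `Δx`:
for `x ∈ [jΔx, (j+1)Δx)` it equals `v j + ((x − jΔx)/Δx)(v (j+1) − v j)`. -/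
noncomputable def interp {H : Type*} [AddCommGroup H] [Module ℝ H] (Δx : ℝ) (v : ℕ → H) :
    ℝ → H :=
  fun x =>
    v ⌊x / Δx⌋₊ + ((x - (⌊x / Δx⌋₊ : ℝ) * Δx) / Δx) • (v (⌊x / Δx⌋₊ + 1) - v ⌊x / Δx⌋₊)

/-- The operator `T` acting on `H`-valued functions on `[0,∞)` by
`(T F)(x) = F(x) + λ (F(x + Δx) − F(x))` with `λ = Δt/Δx`. -/
noncomputable def stepOp {H : Type*} [AddCommGroup H] [Module ℝ H] (Δx Δt : ℝ) (F : ℝ → H) : ℝ → H :=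
  fun x => F x + (Δt / Δx) • (F (x + Δx) - F x)


section Aux
variable {H : Type*} [AddCommGroup H] [Module ℝ H]

lemma interp_add (Δx : ℝ) (v w : ℕ → H) (x : ℝ) :
    interp Δx (fun j => v j + w j) x = interp Δx v x + interp Δx w x := by
  simp only [interp]
  module

lemma interp_shift (Δx : ℝ) (hΔx : 0 < Δx) (v : ℕ → H) (x : ℝ) (hx : 0 ≤ x) :
    interp Δx v (x + Δx) = interp Δx (fun j => v (j + 1)) x := by
  have h1 : (x + Δx) / Δx = x / Δx + 1 := by field_simp
  have h2 : ⌊(x + Δx) / Δx⌋₊ = ⌊x / Δx⌋₊ + 1 := by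
    rw [h1, Nat.floor_add_one (by positivity)]
  simp only [interp, h2]
  have : x + Δx - (↑(⌊x / Δx⌋₊ + 1) : ℝ) * Δx = x - (⌊x / Δx⌋₊ : ℝ) * Δx := by
    push_cast; ring
  rw [this]

lemma stepOp_interp (Δx Δt : ℝ) (hΔx : 0 < Δx) (v : ℕ → H) (x : ℝ) (hx : 0 ≤ x) :
    stepOp Δx Δt (interp Δx v) x
      = interp Δx (fun j => (Δt / Δx) • v (j + 1) + (1 - Δt / Δx) • v j) x := by
  rw [stepOp, interp_shift Δx hΔx v x hx]
  simp only [interp]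
  module

lemma stepOp_congr (Δx Δt : ℝ) (F G : ℝ → H) (x : ℝ) (h1 : F x = G x)
    (h2 : F (x + Δx) = G (x + Δx)) : stepOp Δx Δt F x = stepOp Δx Δt G x := by
  simp [stepOp, h1, h2]

lemma stepOp_add (Δx Δt : ℝ) (F G : ℝ → H) (x : ℝ) :
    stepOp Δx Δt (fun x => F x + G x) x = stepOp Δx Δt F x + stepOp Δx Δt G x := by
  simp only [stepOp]; module

lemma stepOp_sum {ι : Type*} (Δx Δt : ℝ) (s : Finset ι) (F : ι → ℝ → H) (x : ℝ) :
    stepOp Δx Δt (fun x => ∑ i ∈ s, F i x) x = ∑ i ∈ s, stepOp Δx Δt (F i) x := by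
  simp only [stepOp, ← Finset.sum_sub_distrib, Finset.smul_sum, ← Finset.sum_add_distrib]

end Aux

/-- If the grid values `y_jⁿ` satisfy the finite difference recursion
`y_j^{n+1} = λ y_{j+1}ⁿ + (1−λ) y_jⁿ + β_jⁿ(ΔLⁿ)`, then the piecewise linear interpolations
satisfy `Ỹⁿ = Tⁿ Ỹ⁰ + Σ_{i=0}^{n−1} T^{n−1−i} (β̃ⁱ(ΔLⁱ))` at every `x ≥ 0`. -/
theorem stmt_16 {H V : Type*}
    [NormedAddCommGroup H] [InnerProductSpace ℝ H]
    [NormedAddCommGroup V] [InnerProductSpace ℝ V]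
    (Δx Δt : ℝ) (hΔx : 0 < Δx) (hΔt : 0 < Δt) (hlam : Δt / Δx ≤ 1)
    (y : ℕ → ℕ → H) (β : ℕ → ℕ → V →L[ℝ] H) (ΔL : ℕ → V)
    (hrec : ∀ n j : ℕ,
      y (n + 1) j = (Δt / Δx) • y n (j + 1) + (1 - Δt / Δx) • y n j + β n j (ΔL n)) :
    ∀ n : ℕ, ∀ x : ℝ, 0 ≤ x →
      interp Δx (y n) x
        = (stepOp Δx Δt)^[n] (interp Δx (y 0)) x
          + ∑ i ∈ Finset.range n,
              (stepOp Δx Δt)^[n - 1 - i] (interp Δx fun j => β i j (ΔL i)) x := by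
  intro n
  induction n with
  | zero => intro x hx; simp
  | succ n ih =>
    intro x hx
    have hx' : 0 ≤ x + Δx := by linarith
    have key : interp Δx (y (n + 1)) x
        = stepOp Δx Δt (interp Δx (y n)) x + interp Δx (fun j => β n j (ΔL n)) x := by
      rw [stepOp_interp Δx Δt hΔx _ x hx, ← interp_add]
      congr 1
      ext j
      rw [hrec n j]
    rw [key]
    have hcongr : stepOp Δx Δt (interp Δx (y n)) x
        = stepOp Δx Δt (fun x => (stepOp Δx Δt)^[n] (interp Δx (y 0)) x
            + ∑ i ∈ Finset.range n,
              (stepOp Δx Δt)^[n - 1 - i] (interp Δx fun j => β i j (ΔL i)) x) x := by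
      apply stepOp_congr
      · exact ih x hx
      · exact ih (x + Δx) hx'
    rw [hcongr, stepOp_add, stepOp_sum]
    rw [Finset.sum_range_succ]
    have h0 : (n + 1) - 1 - n = 0 := by omega
    rw [h0, Function.iterate_zero_apply]
    have hT : stepOp Δx Δt ((stepOp Δx Δt)^[n] (interp Δx (y 0))) x
        = (stepOp Δx Δt)^[n + 1] (interp Δx (y 0)) x := by
      rw [Function.iterate_succ_apply']
    rw [hT]
    have hsum : ∀ i ∈ Finset.range n,
        stepOp Δx Δt ((stepOp Δx Δt)^[n - 1 - i] (interp Δx fun j => β i j (ΔL i))) x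
        = (stepOp Δx Δt)^[(n + 1) - 1 - i] (interp Δx fun j => β i j (ΔL i)) x := by
      intro i hi
      have : (n + 1) - 1 - i = (n - 1 - i) + 1 := by
        simp at hi; omega
      rw [this, Function.iterate_succ_apply']
    rw [Finset.sum_congr rfl hsum]
    abel
end
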